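/- (Interior C^{1,1} regularity, quantitative form) Let Ω ⊆ ℝ^N be open, φ : Ω → ℝ everywhere differentiable with |∇φ| = 1 in Ω. Let B be an open ball with B̄ ⊆ Ω and let d ∈ (0, dist(B, ∂Ω)/5). Then there is a universal constant C > 0 (independent of φ, Ω, N, B, d) such that |∇φ(x) − ∇φ(y)| ≤ (C/d)|x − y| for all x, y ∈ B with |x − y| < d/10. -/

import Mathlib

/-!
Along a gradient line an eikonal function grows at unit speed, and as long as the segment stays in
the domain it cannot stop doing so: a maximum of `φ - δ * dist · x` with `δ < 1` can never be
interior, because `φ` rises at rate one in the direction of its gradient. Hence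
`φ (x + d • ∇φ x) = φ x + d` whenever `closedBall x d` lies in the domain, and comparing this with
the `1`-Lipschitz bound gives the two-sided quadratic estimate
`|φ z - φ x - ⟪∇φ x, z - x⟫| ≤ ‖z - x‖² / d`. Testing the semiconvexity at `x` and the
semiconcavity at `y` at the point `y + ‖x - y‖ • (∇φ x - ∇φ y) / ‖∇φ x - ∇φ y‖` yields
`‖∇φ x - ∇φ y‖ ≤ 6 / d * ‖x - y‖`.
-/

open Metric Filter Set InnerProductSpace
open scoped RealInnerProductSpace Topology

variable {E : Type*} [NormedAddCommGroup E] [InnerProductSpace ℝ E]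

theorem norm_sub_smul_le_of_norm_eq_one {p v : E} {d : ℝ} (hd : 0 < d) (hp : ‖p‖ = 1)
    (hv : ‖v‖ ≤ d) : ‖v - d • p‖ ≤ d - ⟪p, v⟫ + ‖v‖ ^ 2 / d := by
  have hpv : ⟪p, v⟫ ≤ ‖v‖ := by simpa [hp] using real_inner_le_norm p v
  have hsq : ‖v - d • p‖ ^ 2 = ‖v‖ ^ 2 - 2 * d * ⟪p, v⟫ + d ^ 2 := by
    rw [norm_sub_sq_real, real_inner_smul_right, norm_smul, Real.norm_of_nonneg hd.le, hp,
      real_inner_comm]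
    ring
  have hrhs : 0 ≤ d - ⟪p, v⟫ + ‖v‖ ^ 2 / d := by
    have := div_nonneg (sq_nonneg ‖v‖) hd.le
    linarith
  refine (pow_le_pow_iff_left₀ (norm_nonneg _) hrhs two_ne_zero).1 ?_
  -- the gap between the squares is `(⟪p, v⟫ - ‖v‖² / d)² + ‖v‖²`
  have hd' : ‖v‖ ^ 2 / d * d = ‖v‖ ^ 2 := div_mul_cancel₀ _ hd.ne'
  rw [hsq]
  nlinarith [sq_nonneg (⟪p, v⟫ - ‖v‖ ^ 2 / d), sq_nonneg ‖v‖]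

section Complete

variable [CompleteSpace E]

theorem gradient_fun_neg (φ : E → ℝ) (x : E) : gradient (fun y => -φ y) x = -gradient φ x := by
  simp [gradient, fderiv_fun_neg]

theorem hasDerivAt_apply_add_smul {φ : E → ℝ} {x : E} (hφ : DifferentiableAt ℝ φ x) (v : E) :
    HasDerivAt (fun t : ℝ => φ (x + t • v)) ⟪gradient φ x, v⟫ 0 := by
  have hline : HasDerivAt (fun t : ℝ => x + t • v) v 0 := by
    simpa using ((hasDerivAt_id (0 : ℝ)).smul_const v).const_add x
  have hφ' : HasFDerivAt φ (fderiv ℝ φ x) (x + (0 : ℝ) • v) := by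
    simpa using hφ.hasFDerivAt
  rw [inner_gradient_left]
  exact hφ'.comp_hasDerivAt 0 hline

theorem one_le_of_isLocalMax_sub_mul_dist {φ : E → ℝ} {x z : E} {δ : ℝ} (hδ : 0 ≤ δ)
    (hφ : DifferentiableAt ℝ φ z) (hz : ‖gradient φ z‖ = 1)
    (hmax : IsLocalMax (fun y => φ y - δ * dist y x) z) : 1 ≤ δ := by
  set w := gradient φ z
  have hderiv : HasDerivAt (fun t : ℝ => φ (z + t • w) - δ * t) (1 - δ) 0 := by
    have := (hasDerivAt_apply_add_smul hφ w).sub ((hasDerivAt_id (0 : ℝ)).const_mul δ)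
    rwa [real_inner_self_eq_norm_sq, hz, one_pow, mul_one] at this
  -- moving along `w` raises the penalty `δ * dist · x` by at most `δ * t`
  have hmaxOn : IsLocalMaxOn (fun t : ℝ => φ (z + t • w) - δ * t) (Ici 0) 0 := by
    have hcont : Tendsto (fun t : ℝ => z + t • w) (𝓝 0) (𝓝 z) :=
      Continuous.tendsto' (by fun_prop) 0 z (by simp)
    have hmax' : ∀ᶠ t in 𝓝 (0 : ℝ),
        φ (z + t • w) - δ * dist (z + t • w) x ≤ φ z - δ * dist z x :=
      hcont.eventually hmax
    filter_upwards [nhdsWithin_le_nhds hmax', self_mem_nhdsWithin] with t ht ht0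
    have htri : dist (z + t • w) x ≤ dist z x + t := by
      calc dist (z + t • w) x ≤ dist (z + t • w) z + dist z x := dist_triangle _ _ _
        _ = dist z x + t := by
          rw [dist_eq_norm, add_sub_cancel_left, norm_smul, hz, mul_one,
            Real.norm_of_nonneg ht0, add_comm]
    simp only [zero_smul, add_zero, mul_zero, sub_zero]
    nlinarith [mul_le_mul_of_nonneg_left htri hδ]
  have hseg : segment ℝ (0 : ℝ) (0 + 1) ⊆ Ici 0 := by
    rw [zero_add, segment_eq_Icc zero_le_one]
    exact Icc_subset_Ici_self
  have := hmaxOn.hasFDerivWithinAt_nonpos hderiv.hasDerivWithinAt.hasFDerivWithinAt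
    (mem_posTangentConeAt_of_segment_subset hseg)
  simp only [ContinuousLinearMap.toSpanSingleton_apply, smul_eq_mul, one_mul, tsub_le_iff_right,
    zero_add] at this
  linarith

def IsEikonalOn (φ : E → ℝ) (s : Set E) : Prop :=
  ∀ x ∈ s, DifferentiableAt ℝ φ x ∧ ‖gradient φ x‖ = 1

namespace IsEikonalOn

variable {φ : E → ℝ} {s t : Set E}

theorem mono (h : IsEikonalOn φ s) (hts : t ⊆ s) : IsEikonalOn φ t :=
  fun x hx => h x (hts hx)

theorem neg (h : IsEikonalOn φ s) : IsEikonalOn (fun x => -φ x) s := fun x hx =>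
  ⟨(h x hx).1.neg, by rw [gradient_fun_neg, norm_neg, (h x hx).2]⟩

theorem sub_le_norm_sub (h : IsEikonalOn φ s) (hs : Convex ℝ s) {a b : E} (ha : a ∈ s)
    (hb : b ∈ s) : φ b - φ a ≤ ‖b - a‖ := by
  have hLip := hs.norm_image_sub_le_of_norm_fderiv_le (f := φ) (C := 1) (fun x hx => (h x hx).1)
    (fun x hx => by rw [← (toDual ℝ E).symm.norm_map, ← (h x hx).2]; rfl) ha hb
  simpa using (le_abs_self _).trans hLip

theorem norm_smul_gradient_eq_sub (h : IsEikonalOn φ s) (hs : Convex ℝ s) {x z : E}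
    (hx : x ∈ s) (hz : z ∈ s) (hxz : φ z - φ x = ‖z - x‖) :
    ‖z - x‖ • gradient φ x = z - x := by
  set v := z - x
  -- the `1`-Lipschitz bound is attained at both ends, so it is attained along the whole segment
  have hseg : ∀ t ∈ Icc (0 : ℝ) 1, φ (x + t • v) = φ x + t * ‖v‖ := by
    intro t ht
    have hmem : x + t • v ∈ s := by
      simpa [v] using hs.add_smul_sub_mem hx hz ht
    have h1 := h.sub_le_norm_sub hs hx hmem
    have h2 := h.sub_le_norm_sub hs hmem hz
    have e1 : x + t • v - x = t • v := add_sub_cancel_left _ _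
    have e2 : z - (x + t • v) = (1 - t) • v := by simp only [v]; module
    rw [e1, norm_smul, Real.norm_of_nonneg ht.1] at h1
    rw [e2, norm_smul, Real.norm_of_nonneg (sub_nonneg.2 ht.2)] at h2
    linarith
  have hderiv : HasDerivWithinAt (fun t : ℝ => φ (x + t • v)) ‖v‖ (Icc 0 1) 0 := by
    refine HasDerivWithinAt.congr ?_ hseg (hseg 0 ⟨le_rfl, zero_le_one⟩)
    simpa using ((hasDerivAt_id (0 : ℝ)).mul_const ‖v‖).const_add (φ x) |>.hasDerivWithinAt
  have hinner : ⟪gradient φ x, v⟫ = ‖gradient φ x‖ * ‖v‖ := by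
    rw [(h x hx).2, one_mul]
    exact (uniqueDiffOn_Icc zero_lt_one 0 ⟨le_rfl, zero_le_one⟩).eq_deriv _
      (hasDerivAt_apply_add_smul (h x hx).1 v).hasDerivWithinAt hderiv
  rw [inner_eq_norm_mul_iff_real.1 hinner, (h x hx).2, one_smul]

end IsEikonalOn

end Complete

section Proper

variable [ProperSpace E]

namespace IsEikonalOn

variable {φ : E → ℝ}

theorem exists_add_le_apply {x : E} {r : ℝ} (hr : 0 < r) (h : IsEikonalOn φ (closedBall x r)) :
    ∃ z ∈ closedBall x r, φ x + r ≤ φ z := by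
  have hx : x ∈ closedBall x r := mem_closedBall_self hr.le
  have hcont : ContinuousOn φ (closedBall x r) :=
    fun y hy => (h y hy).1.continuousAt.continuousWithinAt
  obtain ⟨zm, hzm, hmax⟩ := (isCompact_closedBall x r).exists_isMaxOn ⟨x, hx⟩ hcont
  refine ⟨zm, hzm, not_lt.1 fun hlt => ?_⟩
  -- otherwise `φ - δ * dist · x` with `δ < 1` would have an interior maximum
  obtain ⟨δ, hδlow, hδ1⟩ : ∃ δ, (φ zm - φ x) / r < δ ∧ δ < 1 :=
    exists_between ((div_lt_one hr).2 (by linarith))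
  have hδ : 0 ≤ δ := (div_nonneg (sub_nonneg.2 (hmax hx)) hr.le).trans hδlow.le
  have hδr : φ zm - φ x < δ * r := (div_lt_iff₀ hr).1 hδlow
  have hgcont : ContinuousOn (fun y => φ y - δ * dist y x) (closedBall x r) :=
    hcont.sub (continuousOn_const.mul (continuous_id.dist continuous_const).continuousOn)
  obtain ⟨z₀, hz₀, hgmax⟩ := (isCompact_closedBall x r).exists_isMaxOn ⟨x, hx⟩ hgcont
  have hgx : φ x ≤ φ z₀ - δ * dist z₀ x := by simpa using hgmax hx
  have hz₀ball : z₀ ∈ ball x r := by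
    refine mem_ball.2 (lt_of_le_of_ne (mem_closedBall.1 hz₀) fun hsphere => ?_)
    rw [hsphere] at hgx
    linarith [isMaxOn_iff.1 hmax z₀ hz₀]
  have hlocal : IsLocalMax (fun y => φ y - δ * dist y x) z₀ :=
    hgmax.isLocalMax (mem_of_superset (isOpen_ball.mem_nhds hz₀ball) ball_subset_closedBall)
  linarith [one_le_of_isLocalMax_sub_mul_dist hδ (h z₀ hz₀).1 (h z₀ hz₀).2 hlocal]

theorem apply_add_smul_gradient {x : E} {r : ℝ} (hr : 0 < r)
    (h : IsEikonalOn φ (closedBall x r)) : φ (x + r • gradient φ x) = φ x + r := by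
  obtain ⟨z, hz, hxz⟩ := h.exists_add_le_apply hr
  have hx : x ∈ closedBall x r := mem_closedBall_self hr.le
  have hzx : ‖z - x‖ ≤ r := mem_closedBall_iff_norm.1 hz
  have hlip := h.sub_le_norm_sub (convex_closedBall x r) hx hz
  have hnorm : ‖z - x‖ = r := le_antisymm hzx (by linarith)
  have hgrad := h.norm_smul_gradient_eq_sub (convex_closedBall x r) hx hz (by linarith)
  rw [hnorm] at hgrad
  rw [hgrad, add_sub_cancel]
  linarith

theorem add_inner_sub_sq_div_le {x z : E} {d : ℝ} (hd : 0 < d)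
    (h : IsEikonalOn φ (closedBall x d)) (hz : ‖z - x‖ ≤ d) :
    φ x + ⟪gradient φ x, z - x⟫ - ‖z - x‖ ^ 2 / d ≤ φ z := by
  set p := gradient φ x
  have hp : ‖p‖ = 1 := (h x (mem_closedBall_self hd.le)).2
  have hfar : x + d • p ∈ closedBall x d := by
    rw [mem_closedBall_iff_norm, add_sub_cancel_left, norm_smul, hp, mul_one,
      Real.norm_of_nonneg hd.le]
  have hlip := h.sub_le_norm_sub (convex_closedBall x d) (mem_closedBall_iff_norm.2 hz) hfar
  rw [h.apply_add_smul_gradient hd, show x + d • p - z = -(z - x - d • p) by abel,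
    norm_neg] at hlip
  linarith [norm_sub_smul_le_of_norm_eq_one hd hp hz]

theorem le_add_inner_add_sq_div {x z : E} {d : ℝ} (hd : 0 < d)
    (h : IsEikonalOn φ (closedBall x d)) (hz : ‖z - x‖ ≤ d) :
    φ z ≤ φ x + ⟪gradient φ x, z - x⟫ + ‖z - x‖ ^ 2 / d := by
  have hneg := h.neg.add_inner_sub_sq_div_le hd hz
  rw [gradient_fun_neg, inner_neg_left] at hneg
  linarith

theorem inner_gradient_sub_le {x y u : E} {d : ℝ} (hd : 0 < d)
    (hx : IsEikonalOn φ (closedBall x d)) (hy : IsEikonalOn φ (closedBall y d))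
    (hyx : ‖y - x‖ ≤ d) (hu : ‖u‖ ≤ d) (hyxu : ‖y - x + u‖ ≤ d) :
    ⟪gradient φ x - gradient φ y, u⟫ ≤ (‖y - x + u‖ ^ 2 + ‖y - x‖ ^ 2 + ‖u‖ ^ 2) / d := by
  have hlower := hx.add_inner_sub_sq_div_le hd (z := y + u) (by rwa [add_sub_right_comm])
  have hupper₁ := hy.le_add_inner_add_sq_div hd (z := y + u) (by rwa [add_sub_cancel_left])
  have hupper₂ := hx.le_add_inner_add_sq_div hd hyx
  rw [show y + u - x = y - x + u by abel, inner_add_right] at hlower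
  rw [add_sub_cancel_left] at hupper₁
  rw [inner_sub_left, add_div, add_div]
  linarith

theorem norm_gradient_sub_le {x y : E} {d : ℝ} (hd : 0 < d)
    (hx : IsEikonalOn φ (closedBall x d)) (hy : IsEikonalOn φ (closedBall y d))
    (hxy : ‖x - y‖ ≤ d / 2) : ‖gradient φ x - gradient φ y‖ ≤ 6 / d * ‖x - y‖ := by
  set p := gradient φ x
  set q := gradient φ y
  rcases eq_or_ne p q with hpq | hpq
  · rw [hpq, sub_self, norm_zero]
    positivity
  set s := ‖x - y‖
  have hpq' : 0 < ‖p - q‖ := norm_pos_iff.2 (sub_ne_zero.2 hpq)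
  have hs : 0 < s := norm_pos_iff.2 (sub_ne_zero.2 fun hxy => hpq (congrArg (gradient φ) hxy))
  set u := (s / ‖p - q‖) • (p - q)
  have hu : ‖u‖ = s := by
    rw [norm_smul, Real.norm_of_nonneg (by positivity), div_mul_cancel₀ _ hpq'.ne']
  have hyx : ‖y - x‖ = s := norm_sub_rev y x
  have hyxu : ‖y - x + u‖ ≤ 2 * s := (norm_add_le _ _).trans (by rw [hyx, hu, two_mul])
  have hinner : ⟪p - q, u⟫ = s * ‖p - q‖ := by
    rw [real_inner_smul_right, real_inner_self_eq_norm_sq]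
    field_simp
  have key := hx.inner_gradient_sub_le hd hy (u := u) (by linarith) (by linarith) (by linarith)
  rw [hinner, hyx, hu] at key
  have hsq : ‖y - x + u‖ ^ 2 ≤ 4 * s ^ 2 := by nlinarith [norm_nonneg (y - x + u)]
  have : s * ‖p - q‖ ≤ s * (6 / d * s) := by
    calc s * ‖p - q‖ ≤ (‖y - x + u‖ ^ 2 + s ^ 2 + s ^ 2) / d := key
      _ ≤ (6 * s ^ 2) / d := by gcongr; linarith
      _ = s * (6 / d * s) := by ring
  exact le_of_mul_le_mul_left this hs

end IsEikonalOn

end Proper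

theorem eikonal_interior_C11_quantitative :
    ∃ C : ℝ, 0 < C ∧
      ∀ (N : ℕ) (Ω : Set (EuclideanSpace ℝ (Fin N))), IsOpen Ω →
      ∀ φ : EuclideanSpace ℝ (Fin N) → ℝ,
        (∀ x ∈ Ω, DifferentiableAt ℝ φ x) →
        (∀ x ∈ Ω, ‖gradient φ x‖ = 1) →
      ∀ (c : EuclideanSpace ℝ (Fin N)) (ρ : ℝ), 0 < ρ →
        closure (ball c ρ) ⊆ Ω →
      ∀ d : ℝ, 0 < d → (∀ p ∈ ball c ρ, 5 * d < infDist p Ωᶜ) →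
      ∀ x ∈ ball c ρ, ∀ y ∈ ball c ρ, dist x y < d / 10 →
        ‖gradient φ x - gradient φ y‖ ≤ C / d * ‖x - y‖ := by
  refine ⟨6, by norm_num, ?_⟩
  intro N Ω _ φ hdiff heik c ρ _ _ d hd hinf x hx y hy hxy
  have hφ : IsEikonalOn φ Ω := fun z hz => ⟨hdiff z hz, heik z hz⟩
  have hball : ∀ a ∈ ball c ρ, IsEikonalOn φ (closedBall a d) := fun a ha =>
    hφ.mono ((closedBall_subset_ball (by linarith [hinf a ha])).trans ball_infDist_compl_subset)
  refine (hball x hx).norm_gradient_sub_le hd (hball y hy) ?_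
  rw [← dist_eq_norm]
  linarith
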